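/- Let w be the LCA of (u, v), and let û be an ancestor of u with dep(û) ≥ dep(v). Then the LCA of (û, v) is also w. -/

import Mathlib

open Function

/-- `u` is an ancestor of `v` in the rooted forest given by parent pointers `p`. -/
def IsAncestor {V : Type} (p : V → V) (u v : V) : Prop := ∃ i : ℕ, p^[i] v = u

/-- The depth of `v`: the least `i` with `p^[i+1] v = p^[i] v`. -/
noncomputable def dep {V : Type} (p : V → V) (v : V) : ℕ :=
  sInf {i : ℕ | p^[i + 1] v = p^[i] v}

/-- The depth of the rooted tree `p`. -/
noncomputable def treeDep {V : Type} [Fintype V] (p : V → V) : ℕ :=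
  Finset.univ.sup (dep p)

/-- `w` is the lowest common ancestor of `(u, v)`: a common ancestor of maximal depth. -/
def IsLCA {V : Type} (p : V → V) (u v w : V) : Prop :=
  IsAncestor p w u ∧ IsAncestor p w v ∧
    ∀ x, IsAncestor p x u → IsAncestor p x v → dep p x ≤ dep p w

/-!
Depth drops by exactly one along each parent pointer (until the root), so two ancestors of
the same vertex are comparable, the shallower one being an ancestor of the deeper one. Since
`dep v ≤ dep û`, the ancestor `w` of `v` is no deeper than `û`, hence is an ancestor of `û`;
and every common ancestor of `û` and `v` is one of `u` and `v`, hence no deeper than `w`.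
-/

section Depth

variable {V : Type} {p : V → V} (hstab : ∀ v : V, ∃ i : ℕ, p^[i + 1] v = p^[i] v)
include hstab

theorem iterate_dep_succ (x : V) : p^[dep p x + 1] x = p^[dep p x] x :=
  Nat.sInf_mem (hstab x)

theorem apply_eq_self_of_dep_eq_zero {x : V} (h : dep p x = 0) : p x = x := by
  simpa [h] using iterate_dep_succ hstab x

theorem dep_apply (x : V) : dep p (p x) = dep p x - 1 := by
  rcases Nat.eq_zero_or_pos (dep p x) with h | h
  · rw [apply_eq_self_of_dep_eq_zero hstab h, h]
  · have hle : dep p (p x) ≤ dep p x - 1 := by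
      apply Nat.sInf_le
      show p^[dep p x - 1 + 1] (p x) = p^[dep p x - 1] (p x)
      rw [← iterate_succ_apply, ← iterate_succ_apply]
      simpa only [Nat.succ_eq_add_one, Nat.sub_add_cancel h] using iterate_dep_succ hstab x
    have hge : dep p x ≤ dep p (p x) + 1 := Nat.sInf_le (iterate_dep_succ hstab (p x))
    omega

theorem dep_iterate (k : ℕ) (x : V) : dep p (p^[k] x) = dep p x - k := by
  induction k with
  | zero => simp
  | succ k ih => rw [iterate_succ_apply', dep_apply hstab, ih, Nat.sub_sub]

theorem IsAncestor.dep_le {a b : V} (h : IsAncestor p a b) : dep p a ≤ dep p b := by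
  obtain ⟨i, rfl⟩ := h
  rw [dep_iterate hstab]
  exact Nat.sub_le _ _

theorem IsAncestor.of_dep_le {a b x : V} (ha : IsAncestor p a x) (hb : IsAncestor p b x)
    (hle : dep p a ≤ dep p b) : IsAncestor p a b := by
  obtain ⟨i, rfl⟩ := ha
  obtain ⟨j, rfl⟩ := hb
  rcases le_total j i with hji | hij
  · exact ⟨i - j, by rw [← iterate_add_apply, Nat.sub_add_cancel hji]⟩
  · -- now `b` is an ancestor of `a`, so `dep a ≤ dep b` forces `a` to be the root
    obtain ⟨k, rfl⟩ := Nat.exists_eq_add_of_le hij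
    rw [add_comm, iterate_add_apply] at hle ⊢
    rcases Nat.eq_zero_or_pos k with rfl | hk
    · exact ⟨0, rfl⟩
    · rw [dep_iterate hstab k] at hle
      have hroot := apply_eq_self_of_dep_eq_zero hstab (x := p^[i] x) (by omega)
      exact ⟨0, by rw [iterate_fixed hroot]; rfl⟩

end Depth

theorem IsAncestor.trans {V : Type} {p : V → V} {a b c : V} (hab : IsAncestor p a b)
    (hbc : IsAncestor p b c) : IsAncestor p a c := by
  obtain ⟨i, rfl⟩ := hab
  obtain ⟨j, rfl⟩ := hbc
  exact ⟨i + j, iterate_add_apply p i j c⟩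

theorem stmt15_general {V : Type}
    (p : V → V)
    (hstab : ∀ v : V, ∃ i : ℕ, p^[i + 1] v = p^[i] v)
    (u v w uhat : V) (hlca : IsLCA p u v w)
    (hanc : IsAncestor p uhat u) (hdep : dep p v ≤ dep p uhat) :
    IsLCA p uhat v w := by
  obtain ⟨hwu, hwv, hmax⟩ := hlca
  exact ⟨hwu.of_dep_le hstab hanc ((hwv.dep_le hstab).trans hdep), hwv,
    fun x hxu hxv => hmax x (hxu.trans hanc) hxv⟩

theorem stmt15 {V : Type} [Fintype V] [DecidableEq V]
    (p : V → V) (r : V)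
    (hstab : ∀ v : V, ∃ i : ℕ, p^[i + 1] v = p^[i] v)
    (hr : p r = r) (hroot : ∀ v : V, p v = v → v = r)
    (u v w uhat : V) (hlca : IsLCA p u v w)
    (hanc : IsAncestor p uhat u) (hdep : dep p v ≤ dep p uhat) :
    IsLCA p uhat v w :=
  stmt15_general p hstab u v w uhat hlca hanc hdep
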